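/- arXiv:2303.08612 — 5 statements merged into one kernel-verified Lean document; each statement's English description precedes it below -/
import Mathlib

section
/- For every g ≥ 1, writing [3g] = {a_1,...,a_g, b_1,...,b_g, c_1,...,c_g}, the three sequences s_1 = (a_1,...,a_g, b_g,...,b_1), s_2 = (b_1,...,b_g, c_g,...,c_1), s_3 = (c_1,...,c_g, a_g,...,a_1) form a (3, 3g, 2g+1) prefix covering design. -/
open scoped BigOperators

/-- `x` occurs at 1-indexed level `ℓ` in some sequence of `s`. -/
def OccursAt {d K : ℕ} (s : Fin d → List (Fin K)) (x : Fin K) (ℓ : ℕ) : Prop :=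
  1 ≤ ℓ ∧ ∃ i : Fin d, (s i)[ℓ - 1]? = some x

/-- `ℓ_min(x)`: the minimal 1-indexed level at which `x` occurs in any sequence. -/
noncomputable def lMin {d K : ℕ} (s : Fin d → List (Fin K)) (x : Fin K) : ℕ :=
  sInf {ℓ | OccursAt s x ℓ}

/-- `ℓ_max(x)`: the maximal 1-indexed level at which `x` occurs in any sequence. -/
noncomputable def lMax {d K : ℕ} (s : Fin d → List (Fin K)) (x : Fin K) : ℕ :=
  sSup {ℓ | OccursAt s x ℓ}

/-- Total number of occurrences of `x` among the sequences. -/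
def totalCount {d K : ℕ} (s : Fin d → List (Fin K)) (x : Fin K) : ℕ :=
  ∑ i : Fin d, (s i).count x

/-- Triplet condition: every 3-element subset of `[K]` is covered by at most three
prefixes of total length at most `α`. -/
def TripletCond (d K α : ℕ) (s : Fin d → List (Fin K)) : Prop :=
  ∀ a b c : Fin K, a ≠ b → a ≠ c → b ≠ c →
    ∃ (i i' i'' : Fin d) (ℓ ℓ' ℓ'' : ℕ), ℓ + ℓ' + ℓ'' ≤ α ∧
      ∀ x : Fin K, (x = a ∨ x = b ∨ x = c) →
        x ∈ (s i).take ℓ ∨ x ∈ (s i').take ℓ' ∨ x ∈ (s i'').take ℓ''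

/-- Singleton condition: `ℓ_min(x) + ℓ_max(x) ≤ α + 1` for every repeated element `x`. -/
def SingletonCond (d K α : ℕ) (s : Fin d → List (Fin K)) : Prop :=
  ∀ x : Fin K, 2 ≤ totalCount s x → lMin s x + lMax s x ≤ α + 1

/-- A `(d, K, α)` prefix covering design. -/
def IsPCD (d K α : ℕ) (s : Fin d → List (Fin K)) : Prop :=
  TripletCond d K α s ∧ SingletonCond d K α s

/-- A convenient embedding of a doubly-indexed element into `Fin N`. -/
def pcdElem (off a b N : ℕ) (h : off + a * b ≤ N) (i : Fin a) (t : Fin b) : Fin N :=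
  ⟨off + (i.1 * b + t.1), by
    have hi := i.isLt
    have ht := t.isLt
    have h2 : i.1 * b + t.1 < a * b := by
      calc i.1 * b + t.1 < i.1 * b + b := by omega
        _ = (i.1 + 1) * b := (Nat.succ_mul _ _).symm
        _ ≤ a * b := Nat.mul_le_mul_right _ hi
    omega⟩

/-- A `(v, k, 2)` covering design with `d` blocks. -/
def IsCoveringDesign (v k d : ℕ) (B : Fin d → Finset (Fin v)) : Prop :=
  (∀ i, (B i).card = k) ∧ ∀ x y : Fin v, x ≠ y → ∃ i, x ∈ B i ∧ y ∈ B i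

/-- The set of qualities `K/α` of `(d, K, α)` prefix covering designs; `γ_d` is its supremum. -/
def gammaSet (d : ℕ) : Set ℝ :=
  {q | ∃ (K α : ℕ) (s : Fin d → List (Fin K)),
    4 ≤ K ∧ 0 < α ∧ IsPCD d K α s ∧ q = (K : ℝ) / (α : ℝ)}

/-!
The element `t` of block `j` (counting from `0`) sits at level `t + 1` of `seq j` and at level
`2g - t` of `seq (j - 1)`, so the singleton condition holds with equality. For a triple, let
`elem j t` have the largest `t`. If another element of the triple lies in block `j`, the prefix
of length `t + 1` of `seq j` and a front prefix for the third element have total length at most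
`2g`. Otherwise the prefix of length `2g - t` of `seq (j - 1)` contains `elem j t` and all of
block `j - 1`, and the prefix of length `t + 1` of `seq (j + 1)` contains every element of
block `j + 1` with index at most `t`.
-/

section PrefixCover

variable {d K : ℕ} (s : Fin d → List (Fin K)) (α : ℕ)

def PrefixCovered (S : Set (Fin K)) : Prop :=
  ∃ (i i' i'' : Fin d) (ℓ ℓ' ℓ'' : ℕ), ℓ + ℓ' + ℓ'' ≤ α ∧
    ∀ x ∈ S, x ∈ (s i).take ℓ ∨ x ∈ (s i').take ℓ' ∨ x ∈ (s i'').take ℓ''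

variable {s α}

theorem tripletCond_of_prefixCovered (h : ∀ a b c : Fin K, PrefixCovered s α {a, b, c}) :
    TripletCond d K α s :=
  fun a b c _ _ _ => h a b c

theorem prefixCovered_of_two {S : Set (Fin K)} {i i' : Fin d} {ℓ ℓ' : ℕ} (hα : ℓ + ℓ' ≤ α)
    (hS : ∀ x ∈ S, x ∈ (s i).take ℓ ∨ x ∈ (s i').take ℓ') : PrefixCovered s α S :=
  ⟨i, i', i, ℓ, ℓ', 0, by omega, fun x hx => (hS x hx).imp_right Or.inl⟩

end PrefixCover

theorem List.mem_take_of_getElem? {β : Type*} {l : List β} {k n : ℕ} {x : β}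
    (hx : l[k]? = some x) (hk : k < n) : x ∈ l.take n :=
  List.mem_of_getElem? ((List.getElem?_take_of_lt hk).trans hx)

theorem Fin.eq_add_one_or_sub_one_of_ne {j j' : Fin 3} (h : j' ≠ j) : j' = j + 1 ∨ j' = j - 1 := by
  revert j j'; decide

namespace CyclicPCD

/-- Blocks `j = 0, 1, 2` are the paper's `a`'s, `b`'s, `c`'s, and `elem g j t` is `a_{t+1}` etc. -/
abbrev elem (g : ℕ) (j : Fin 3) (t : Fin g) : Fin (3 * g) :=
  pcdElem 0 3 g (3 * g) (by simp) j t

def seq (g : ℕ) (i : Fin 3) : List (Fin (3 * g)) :=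
  List.ofFn (elem g i) ++ (List.ofFn (elem g (i + 1))).reverse

variable {g : ℕ}

theorem elem_eq_finProdFinEquiv (j : Fin 3) (t : Fin g) : elem g j t = finProdFinEquiv (j, t) := by
  ext
  simp only [pcdElem, finProdFinEquiv_apply_val]
  ring

theorem elem_inj {j j' : Fin 3} {t t' : Fin g} : elem g j t = elem g j' t' ↔ j = j' ∧ t = t' := by
  simp only [elem_eq_finProdFinEquiv, finProdFinEquiv.apply_eq_iff_eq, Prod.mk.injEq]

theorem exists_elem_eq (x : Fin (3 * g)) : ∃ j t, elem g j t = x := by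
  obtain ⟨⟨j, t⟩, rfl⟩ := finProdFinEquiv.surjective x
  exact ⟨j, t, elem_eq_finProdFinEquiv j t⟩

theorem getElem?_seq (i : Fin 3) (k : ℕ) :
    (seq g i)[k]? = if h : k < g then some (elem g i ⟨k, h⟩)
      else if h' : k < 2 * g then some (elem g (i + 1) ⟨2 * g - 1 - k, by omega⟩) else none := by
  unfold seq
  split_ifs with h h'
  · rw [List.getElem?_append_left (by simpa using h), List.getElem?_ofFn, dif_pos h]
  · rw [List.getElem?_append_right (by simpa using h),
      List.getElem?_reverse (by simp; omega), List.getElem?_ofFn]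
    simp only [List.length_ofFn]
    rw [dif_pos (by omega)]
    congr 3
    omega
  · exact List.getElem?_eq_none (by simp; omega)

theorem getElem?_seq_eq_some_iff {i j : Fin 3} {t : Fin g} {k : ℕ} :
    (seq g i)[k]? = some (elem g j t) ↔ (i = j ∧ k = t) ∨ (i + 1 = j ∧ k + t + 1 = 2 * g) := by
  rw [getElem?_seq]
  split_ifs with h h'
  · have hk : k + t + 1 ≠ 2 * g := by omega
    simp only [Option.some_inj, elem_inj, Fin.ext_iff (n := g), hk, and_false, or_false]
  · have hk : k ≠ t := by omega
    simp only [Option.some_inj, elem_inj, Fin.ext_iff (n := g), hk, and_false, false_or]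
    exact and_congr_right fun _ => by omega
  · simp only [false_iff]
    rintro (⟨-, hk⟩ | ⟨-, hk⟩) <;> omega

theorem elem_mem_take_seq {j : Fin 3} {t : Fin g} {ℓ : ℕ} (h : t < ℓ) :
    elem g j t ∈ (seq g j).take ℓ :=
  List.mem_take_of_getElem? (getElem?_seq_eq_some_iff.2 (.inl ⟨rfl, rfl⟩)) h

theorem elem_succ_mem_take_seq {i : Fin 3} {t : Fin g} {ℓ : ℕ} (h : 2 * g ≤ ℓ + t) :
    elem g (i + 1) t ∈ (seq g i).take ℓ :=
  List.mem_take_of_getElem? (k := 2 * g - 1 - t)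
    (getElem?_seq_eq_some_iff.2 (.inr ⟨rfl, by omega⟩)) (by omega)

theorem occursAt_elem_iff {j : Fin 3} {t : Fin g} {ℓ : ℕ} :
    OccursAt (seq g) (elem g j t) ℓ ↔ ℓ = t + 1 ∨ ℓ + t = 2 * g := by
  simp only [OccursAt, getElem?_seq_eq_some_iff]
  constructor
  · rintro ⟨hℓ, i, (⟨-, hk⟩ | ⟨-, hk⟩)⟩ <;> omega
  · rintro (hℓ | hℓ)
    · exact ⟨by omega, j, .inl ⟨rfl, by omega⟩⟩
    · exact ⟨by omega, j - 1, .inr ⟨sub_add_cancel j 1, by omega⟩⟩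

theorem singletonCond : SingletonCond 3 (3 * g) (2 * g + 1) (seq g) := by
  intro x _
  obtain ⟨j, t, rfl⟩ := exists_elem_eq x
  have hmin : lMin (seq g) (elem g j t) ≤ t + 1 :=
    Nat.sInf_le (occursAt_elem_iff.2 (.inl rfl))
  have hmax : lMax (seq g) (elem g j t) ≤ 2 * g - t :=
    csSup_le ⟨_, occursAt_elem_iff.2 (.inl rfl)⟩ fun ℓ hℓ => by
      rcases occursAt_elem_iff.1 hℓ with h | h <;> omega
  omega

theorem prefixCovered_of_same_block {j j' : Fin 3} {t t' t'' : Fin g} (h' : t' ≤ t) :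
    PrefixCovered (seq g) (2 * g + 1) {elem g j t, elem g j t', elem g j' t''} := by
  have ht := t.isLt
  have ht'' := t''.isLt
  refine prefixCovered_of_two (i := j) (i' := j') (ℓ := t + 1) (ℓ' := t'' + 1) (by omega) ?_
  rintro x (rfl | rfl | rfl)
  · exact .inl (elem_mem_take_seq (by omega))
  · exact .inl (elem_mem_take_seq (by omega))
  · exact .inr (elem_mem_take_seq (by omega))

theorem prefixCovered_of_le {j j' j'' : Fin 3} {t t' t'' : Fin g} (h' : t' ≤ t) (h'' : t'' ≤ t) :
    PrefixCovered (seq g) (2 * g + 1) {elem g j t, elem g j' t', elem g j'' t''} := by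
  by_cases hj' : j' = j
  · subst hj'
    exact prefixCovered_of_same_block h'
  by_cases hj'' : j'' = j
  · subst hj''
    rw [Set.pair_comm]
    exact prefixCovered_of_same_block h''
  have ht := t.isLt
  have hback : ∀ (k : Fin 3) (s : Fin g), k ≠ j → s ≤ t →
      elem g k s ∈ (seq g (j - 1)).take (2 * g - t) ∨ elem g k s ∈ (seq g (j + 1)).take (t + 1) := by
    intro k s hk hs
    rcases Fin.eq_add_one_or_sub_one_of_ne hk with rfl | rfl
    · exact .inr (elem_mem_take_seq (by omega))
    · exact .inl (elem_mem_take_seq (by omega))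
  refine prefixCovered_of_two (i := j - 1) (i' := j + 1) (ℓ := 2 * g - t) (ℓ' := t + 1) (by omega) ?_
  rintro x (rfl | rfl | rfl)
  · have hx := elem_succ_mem_take_seq (i := j - 1) (t := t) (ℓ := 2 * g - t) (by omega)
    rw [sub_add_cancel] at hx
    exact .inl hx
  · exact hback j' t' hj' h'
  · exact hback j'' t'' hj'' h''

theorem tripletCond : TripletCond 3 (3 * g) (2 * g + 1) (seq g) := by
  refine tripletCond_of_prefixCovered fun a b c => ?_
  obtain ⟨ja, ta, rfl⟩ := exists_elem_eq a
  obtain ⟨jb, tb, rfl⟩ := exists_elem_eq b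
  obtain ⟨jc, tc, rfl⟩ := exists_elem_eq c
  rcases le_total tb ta with hba | hab
  · rcases le_total tc ta with hca | hac
    · exact prefixCovered_of_le hba hca
    · rw [Set.pair_comm, Set.insert_comm]
      exact prefixCovered_of_le hac (hba.trans hac)
  · rcases le_total tc tb with hcb | hbc
    · rw [Set.insert_comm]
      exact prefixCovered_of_le hab hcb
    · rw [Set.pair_comm, Set.insert_comm]
      exact prefixCovered_of_le (hab.trans hbc) hbc

end CyclicPCD

theorem stmt_1 (g : ℕ) :
    IsPCD 3 (3 * g) (2 * g + 1)
      (fun i : Fin 3 =>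
        List.ofFn (fun t : Fin g => pcdElem 0 3 g (3 * g) (by simp) i t) ++
        (List.ofFn (fun t : Fin g => pcdElem 0 3 g (3 * g) (by simp) (i + 1) t)).reverse) :=
  ⟨CyclicPCD.tripletCond, CyclicPCD.singletonCond⟩
end

section
/- For every (v, k, 2) covering design with d ≥ 2 blocks, it holds that k ≥ 2v/d. -/
open scoped BigOperators

open Finset

/-!
Count incidences. If every point lies in at least two blocks, then `2 v ≤ ∑ |B_i| = k d`.
Otherwise some point `x` lies in at most one block; since every pair `{x, y}` is covered,
that block contains every point, so `k = v` and `2 v ≤ d v = k d`.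
-/

section BlockFamily

variable {ι α : Type*} [Fintype ι] [Fintype α] [DecidableEq α]

theorem card_mul_le_sum_card_of_le_card_blocks {n : ℕ} (B : ι → Finset α)
    (h : ∀ x, n ≤ #{i | x ∈ B i}) : Fintype.card α * n ≤ ∑ i, #(B i) :=
  calc Fintype.card α * n = ∑ _x : α, n := by simp [mul_comm]
    _ ≤ ∑ x, #{i | x ∈ B i} := sum_le_sum fun x _ ↦ h x
    _ = ∑ i, #(B i) := by
      simp only [card_filter]
      rw [sum_comm]
      simp

theorem exists_block_eq_univ_of_card_blocks_le_one {B : ι → Finset α}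
    (hcov : ∀ x y : α, x ≠ y → ∃ i, x ∈ B i ∧ y ∈ B i) {x y : α} (hxy : x ≠ y)
    (hx : #{i | x ∈ B i} ≤ 1) : ∃ i, B i = univ := by
  obtain ⟨i, hxi, -⟩ := hcov x y hxy
  have hunique : ∀ j, x ∈ B j → j = i := fun j hxj ↦
    card_le_one.mp hx j (by simpa using hxj) i (by simpa using hxi)
  refine ⟨i, eq_univ_of_forall fun z ↦ ?_⟩
  by_cases hzx : z = x
  · exact hzx ▸ hxi
  · obtain ⟨j, hxj, hzj⟩ := hcov x z (Ne.symm hzx)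
    exact hunique j hxj ▸ hzj

end BlockFamily

theorem stmt_3_general (v k d : ℕ) (hv : 2 ≤ v) (hd : 2 ≤ d)
    (B : Fin d → Finset (Fin v)) (h : IsCoveringDesign v k d B) :
    2 * v ≤ k * d := by
  obtain ⟨hcard, hcov⟩ := h
  by_cases hall : ∀ x, 2 ≤ #{i | x ∈ B i}
  · simpa [hcard, mul_comm] using card_mul_le_sum_card_of_le_card_blocks B hall
  · simp only [not_forall, not_le] at hall
    obtain ⟨x, hx⟩ := hall
    obtain ⟨y, hyx⟩ := Fintype.exists_ne_of_one_lt_card (by rw [Fintype.card_fin]; omega) x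
    obtain ⟨i, hi⟩ := exists_block_eq_univ_of_card_blocks_le_one hcov hyx.symm (by omega)
    have hvk : v = k := by simpa [hi] using hcard i
    subst hvk
    nlinarith

theorem stmt_3 (v k d : ℕ) (hv : 2 ≤ v) (hk : 2 ≤ k) (hd : 2 ≤ d)
    (B : Fin d → Finset (Fin v)) (h : IsCoveringDesign v k d B) :
    2 * v ≤ k * d :=
  stmt_3_general v k d hv hd B h
end

section
/- Let d ≥ 3, k ∈ ℕ, and let v be a multiple of d such that there is a (v,k,2) covering design with d blocks B_1,...,B_d admitting a multi-matching, i.e., there exist U_i ⊆ B_i with |U_i| = v/d such that U_1,...,U_d partition [v]. Order each block so that U_i occupies the first v/d positions, and define d sequences s_1,...,s_d of length 2k by prepending k fresh distinct elements to each ordered block (kd new elements in total). Then s_1,...,s_d form a (d, (v/d + k)·d, 3k + v/d) prefix covering design. -/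
open scoped BigOperators

/-!
Every element lies in a prefix of length `k + v'` (a fresh element among the first `k` entries
of its sequence, an old one in the `U_i`-part right after them), and every sequence has length
`2k`; this gives the singleton condition. For the triplet condition, either two of the three
elements are old, so a single whole sequence (length `2k`) contains both by the covering
property and a prefix of length `k + v'` takes the third, or two are fresh and the three
elements are picked up by prefixes of lengths `k`, `k` and `k + v'`.
-/

section PrefixCovering

variable {d K : ℕ} (s : Fin d → List (Fin K))

lemma lMin_le_of_mem_take {x : Fin K} {i : Fin d} {m : ℕ} (h : x ∈ (s i).take m) :
    lMin s x ≤ m := by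
  obtain ⟨p, hp⟩ := List.mem_iff_getElem?.1 h
  rw [List.getElem?_take] at hp
  split_ifs at hp with hpm
  have hocc : OccursAt s x (p + 1) := ⟨le_add_self, i, by simpa using hp⟩
  exact (Nat.sInf_le hocc).trans hpm

lemma lMax_le_of_length_le {L : ℕ} (hlen : ∀ i, (s i).length ≤ L) (x : Fin K) :
    lMax s x ≤ L := by
  refine csSup_le' fun ℓ ⟨_, i, hi⟩ => ?_
  by_contra! hL
  rw [List.getElem?_eq_none (by have := hlen i; omega)] at hi
  simp at hi

variable {s}

lemma singletonCond_of_length_le {α L R : ℕ} (hlen : ∀ i, (s i).length ≤ L)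
    (hreach : ∀ x, ∃ i, x ∈ (s i).take R) (hα : L + R ≤ α + 1) :
    SingletonCond d K α s := by
  intro x _
  obtain ⟨i, hi⟩ := hreach x
  have := lMin_le_of_mem_take s hi
  have := lMax_le_of_length_le s hlen x
  omega

lemma tripletCond_of_pairs (p : Fin K → Prop) {α L R F : ℕ}
    (hlen : ∀ i, (s i).length ≤ L)
    (hpair : ∀ x y, p x → p y → x ≠ y → ∃ i, x ∈ s i ∧ y ∈ s i)
    (hreach : ∀ x, ∃ i, x ∈ (s i).take R)
    (hfresh : ∀ x, ¬ p x → ∃ i, x ∈ (s i).take F)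
    (hFR : F ≤ R) (hLR : L + R ≤ α) (hRF : R + F + F ≤ α) :
    TripletCond d K α s := by
  classical
  intro a b c hab hac hbc
  have take_L : ∀ {x i}, x ∈ s i → x ∈ (s i).take L := fun h => by
    rwa [List.take_of_length_le (hlen _)]
  by_cases pab : p a ∧ p b
  · obtain ⟨i, hai, hbi⟩ := hpair a b pab.1 pab.2 hab
    obtain ⟨j, hcj⟩ := hreach c
    exact ⟨i, j, i, L, R, 0, by omega, by rintro w (rfl | rfl | rfl) <;> simp [*]⟩
  by_cases pac : p a ∧ p c
  · obtain ⟨i, hai, hci⟩ := hpair a c pac.1 pac.2 hac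
    obtain ⟨j, hbj⟩ := hreach b
    exact ⟨i, j, i, L, R, 0, by omega, by rintro w (rfl | rfl | rfl) <;> simp [*]⟩
  by_cases pbc : p b ∧ p c
  · obtain ⟨i, hbi, hci⟩ := hpair b c pbc.1 pbc.2 hbc
    obtain ⟨j, haj⟩ := hreach a
    exact ⟨i, j, i, L, R, 0, by omega, by rintro w (rfl | rfl | rfl) <;> simp [*]⟩
  have reach : ∀ x, ∃ i, x ∈ (s i).take (if p x then R else F) := fun x => by
    split_ifs with h
    exacts [hreach x, hfresh x h]
  -- at most one of `a`, `b`, `c` satisfies `p`, so the levels below add up to at most `R + F + F`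
  obtain ⟨i, hai⟩ := reach a
  obtain ⟨j, hbj⟩ := reach b
  obtain ⟨l, hcl⟩ := reach c
  refine ⟨i, j, l, _, _, _, ?_, by rintro w (rfl | rfl | rfl) <;> tauto⟩
  split_ifs <;> first | omega | tauto

end PrefixCovering

section PrependFresh

variable {d v : ℕ} (k : ℕ) (b : Fin d → List (Fin v))

lemma exists_pcdElem_eq {off a c N : ℕ} (h : off + a * c ≤ N) {x : Fin N} (h₁ : off ≤ x)
    (h₂ : (x : ℕ) < off + a * c) : ∃ i t, pcdElem off a c N h i t = x := by
  obtain ⟨⟨i, t⟩, hit⟩ := finProdFinEquiv.surjective (⟨x - off, by omega⟩ : Fin (a * c))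
  have hval := congrArg Fin.val hit
  rw [finProdFinEquiv_apply_val, Nat.mul_comm] at hval
  exact ⟨i, t, Fin.ext (by simp only [pcdElem] at hval ⊢; omega)⟩

def prependFresh (i : Fin d) : List (Fin (v + d * k)) :=
  List.ofFn (fun j : Fin k => pcdElem v d k (v + d * k) le_rfl i j) ++
    (b i).map (Fin.castLE (Nat.le_add_right v (d * k)))

variable {k b}

lemma length_prependFresh {i : Fin d} (hlen : (b i).length = k) :
    (prependFresh k b i).length = k + k := by
  simp [prependFresh, hlen]

lemma exists_mem_take_prependFresh_of_le {x : Fin (v + d * k)} (hx : v ≤ x) :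
    ∃ i, x ∈ (prependFresh k b i).take k := by
  obtain ⟨i, t, rfl⟩ := exists_pcdElem_eq le_rfl hx x.isLt
  exact ⟨i, by simp [prependFresh, List.take_left']⟩

lemma castLE_mem_take_prependFresh {y : Fin v} {i : Fin d} {m : ℕ} (hy : y ∈ (b i).take m) :
    Fin.castLE (Nat.le_add_right v (d * k)) y ∈ (prependFresh k b i).take (k + m) := by
  simp [prependFresh, List.take_append, ← List.map_take, hy]

lemma exists_mem_take_prependFresh {m : ℕ} (hpart : ∀ y, ∃ i, y ∈ (b i).take m)
    (x : Fin (v + d * k)) : ∃ i, x ∈ (prependFresh k b i).take (k + m) := by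
  by_cases hx : x.1 < v
  · obtain ⟨i, hi⟩ := hpart ⟨x, hx⟩
    exact ⟨i, castLE_mem_take_prependFresh hi⟩
  · obtain ⟨i, hi⟩ := exists_mem_take_prependFresh_of_le (b := b) (not_lt.1 hx)
    exact ⟨i, List.take_subset_take_left _ (by omega) hi⟩

lemma exists_mem_prependFresh_pair
    (hcover : ∀ x y : Fin v, x ≠ y → ∃ i, x ∈ b i ∧ y ∈ b i)
    {x y : Fin (v + d * k)} (hx : x.1 < v) (hy : y.1 < v) (hxy : x ≠ y) :
    ∃ i, x ∈ prependFresh k b i ∧ y ∈ prependFresh k b i := by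
  obtain ⟨i, hxi, hyi⟩ := hcover ⟨x, hx⟩ ⟨y, hy⟩ (fun h => hxy (Fin.ext (Fin.mk.inj h)))
  exact ⟨i, List.mem_append_right _ (List.mem_map_of_mem hxi),
    List.mem_append_right _ (List.mem_map_of_mem hyi)⟩

end PrependFresh

theorem stmt_5_general (d k v v' : ℕ)
    (b : Fin d → List (Fin v))
    (hlen : ∀ i, (b i).length = k)
    (hcover : ∀ x y : Fin v, x ≠ y → ∃ i, x ∈ b i ∧ y ∈ b i)
    (hpart : ∀ x : Fin v, ∃! i : Fin d, x ∈ (b i).take v') :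
    IsPCD d (v + d * k) (3 * k + v')
      (fun i =>
        List.ofFn (fun j : Fin k => pcdElem v d k (v + d * k) le_rfl i j) ++
        (b i).map (Fin.castLE (Nat.le_add_right v (d * k)))) := by
  have hlen' : ∀ i, (prependFresh k b i).length ≤ k + k :=
    fun i => (length_prependFresh (hlen i)).le
  have hreach := exists_mem_take_prependFresh (k := k) fun y => (hpart y).exists
  exact ⟨tripletCond_of_pairs (fun x => x.1 < v) hlen'
      (fun _ _ => exists_mem_prependFresh_pair hcover)
      hreach (fun _ hx => exists_mem_take_prependFresh_of_le (not_lt.1 hx))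
      (by omega) (by omega) (by omega),
    singletonCond_of_length_le hlen' hreach (by omega)⟩

theorem stmt_5 (d k v v' : ℕ) (hd : 3 ≤ d) (hk : v' ≤ k) (hv : v = v' * d)
    (b : Fin d → List (Fin v))
    (hlen : ∀ i, (b i).length = k)
    (hnodup : ∀ i, (b i).Nodup)
    (hcover : ∀ x y : Fin v, x ≠ y → ∃ i, x ∈ b i ∧ y ∈ b i)
    (hpart : ∀ x : Fin v, ∃! i : Fin d, x ∈ (b i).take v') :
    IsPCD d (v + d * k) (3 * k + v')
      (fun i =>
        List.ofFn (fun j : Fin k => pcdElem v d k (v + d * k) le_rfl i j) ++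
        (b i).map (Fin.castLE (Nat.le_add_right v (d * k)))) :=
  stmt_5_general d k v v' b hlen hcover hpart
end

section
/- In the prefix covering design constructed from a covering design with multi-matching (Theorem on transformation), for every element x with ℓ_min(x) = m + (n−i)v' + j for some 1 ≤ i ≤ n, 1 ≤ j ≤ v', we have ℓ_max(x) ≤ m + nv' + i(k−v'), and consequently ℓ_min(x) + ℓ_max(x) ≤ 2m + nk + v', where m = nk − (n−1)v'. In particular the (strengthened) singleton bound ℓ_min(x)+ℓ_max(x) ≤ T holds with T = 3nk − (2n−3)v' (not only ≤ T+1), provided k ≥ 2v'. -/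
open scoped BigOperators

/-!
Copy `c < n` of an element of the design (the element `c * v + y`) occurs only in the blocks
`U^{c+1}` and `R^{c+1}`. The `U`-blocks fill the levels `m + 1, …, m + n v'` in increasing
order, so `ℓ_min(x) = m + (n - i) v' + j` forces `x` to be of copy `n - i`. The `R`-blocks come
in reverse order, so `R^{n-i+1}` ends at level `m + n v' + i (k - v')`, which bounds `ℓ_max(x)`.
The bound on `ℓ_min(x) + ℓ_max(x)` is then arithmetic: for `k ≥ 2 v'`,
`(n - i) v' ≤ (n - i)(k - v')`.
-/

namespace List

variable {α : Type*} {c : ℕ}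

theorem length_flatten_of_forall_length_eq {L : List (List α)} (hL : ∀ l ∈ L, l.length = c) :
    L.flatten.length = L.length * c := by
  rw [length_flatten, map_congr_left hL]
  simp

theorem exists_block_of_getElem?_flatten_eq_some :
    ∀ {L : List (List α)} {p : ℕ} {x : α}, (∀ l ∈ L, l.length = c) → L.flatten[p]? = some x →
      ∃ (q : ℕ) (hq : q < L.length), q * c ≤ p ∧ p < (q + 1) * c ∧ x ∈ L[q]
  | [], _, _, _, hx => by simp at hx
  | l :: L, p, x, hL, hx => by
    have hl : l.length = c := hL l mem_cons_self
    rw [flatten_cons, getElem?_append, hl] at hx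
    split_ifs at hx with hp
    · exact ⟨0, by simp, by simp, by simpa using hp, mem_of_getElem? hx⟩
    · obtain ⟨q, hq, hlo, hhi, hmem⟩ :=
        exists_block_of_getElem?_flatten_eq_some (fun l' h' => hL l' (mem_cons_of_mem _ h')) hx
      refine ⟨q + 1, by simpa using hq, ?_, ?_, by simpa using hmem⟩ <;>
        simp only [add_one_mul] at * <;> omega

end List

theorem occursAt_lMin {d K : ℕ} {s : Fin d → List (Fin K)} {x : Fin K} (h : lMin s x ≠ 0) :
    OccursAt s x (lMin s x) := by
  show lMin s x ∈ {ℓ | OccursAt s x ℓ}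
  refine Nat.sInf_mem ?_
  by_contra hempty
  rw [Set.not_nonempty_iff_eq_empty] at hempty
  exact h (by rw [lMin, hempty, Nat.sInf_empty])

theorem lMax_le {d K : ℕ} {s : Fin d → List (Fin K)} {x : Fin K} {B : ℕ}
    (h : ∀ ℓ, OccursAt s x ℓ → ℓ ≤ B) : lMax s x ≤ B :=
  csSup_le' h

theorem pcdElem_zero_val_lt {a b N : ℕ} (h : 0 + a * b ≤ N) (i : Fin a) (t : Fin b) :
    (pcdElem 0 a b N h i t).1 < a * b := by
  have : (i.1 + 1) * b ≤ a * b := Nat.mul_le_mul_right b i.isLt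
  simp only [pcdElem, add_one_mul] at *
  omega

theorem pcdElem_zero_val_div {a b N : ℕ} (h : 0 + a * b ≤ N) (i : Fin a) (t : Fin b) :
    (pcdElem 0 a b N h i t).1 / b = i := by
  simp only [pcdElem, zero_add]
  exact Nat.div_eq_of_lt_le (by omega) (by rw [add_one_mul]; omega)

/-- The sequence `s_i = (A_i, U_i^1, …, U_i^n, R_i^n, …, R_i^1)`: `U_i^{c+1}` and `R_i^{c+1}`
consist of the elements `c * v + y` for `y` among the first `v'`, resp. the remaining, entries of
`b i`, and `A_i` of the elements `n * v + (i * m + t)`. -/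
def replicatedSeq (n m v' : ℕ) {d v : ℕ} (b : Fin d → List (Fin v)) (i : Fin d) :
    List (Fin (n * v + d * m)) :=
  List.ofFn (fun t : Fin m => pcdElem (n * v) d m (n * v + d * m) le_rfl i t) ++
  (List.ofFn (fun j : Fin n =>
    ((b i).take v').map (fun x => pcdElem 0 n v (n * v + d * m) (by simp) j x))).flatten ++
  ((List.ofFn (fun j : Fin n =>
    ((b i).drop v').map (fun x => pcdElem 0 n v (n * v + d * m) (by simp) j x))).reverse).flatten

section replicatedSeq

variable {n m v' k d v : ℕ} {b : Fin d → List (Fin v)} {i : Fin d} {p : ℕ}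
  {x : Fin (n * v + d * m)}

theorem replicatedSeq_getElem?_cases (hlen : (b i).length = k) (hvk : v' ≤ k)
    (h : (replicatedSeq n m v' b i)[p]? = some x) :
    (p < m ∧ n * v ≤ x.1) ∨
    (p < m + n * v' ∧ x.1 < n * v ∧ x.1 / v = (p - m) / v') ∨
    (m + n * v' ≤ p ∧ x.1 < n * v ∧ p < m + n * v' + (n - x.1 / v) * (k - v')) := by
  have hU : ∀ l ∈ List.ofFn (fun j : Fin n =>
      ((b i).take v').map (pcdElem 0 n v (n * v + d * m) (by simp) j)), l.length = v' := by
    simp [hlen, hvk]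
  have hR : ∀ l ∈ (List.ofFn (fun j : Fin n =>
      ((b i).drop v').map (pcdElem 0 n v (n * v + d * m) (by simp) j))).reverse,
      l.length = k - v' := by
    simp [hlen]
  unfold replicatedSeq at h
  rw [List.getElem?_append, List.length_append, List.length_ofFn,
    List.length_flatten_of_forall_length_eq hU, List.length_ofFn] at h
  split_ifs at h with hpU
  · rw [List.getElem?_append, List.length_ofFn] at h
    split_ifs at h with hpA
    · obtain ⟨t, rfl⟩ := List.mem_ofFn.mp (List.mem_of_getElem? h)
      exact Or.inl ⟨hpA, by simp [pcdElem]⟩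
    · obtain ⟨q, hq, hlo, hhi, hmem⟩ := List.exists_block_of_getElem?_flatten_eq_some hU h
      simp only [List.getElem_ofFn, List.mem_map] at hmem
      obtain ⟨y, -, rfl⟩ := hmem
      refine Or.inr (Or.inl ⟨hpU, pcdElem_zero_val_lt _ _ _, ?_⟩)
      rw [pcdElem_zero_val_div, Nat.div_eq_of_lt_le hlo hhi]
  · obtain ⟨q, hq, -, hhi, hmem⟩ := List.exists_block_of_getElem?_flatten_eq_some hR h
    simp only [List.getElem_reverse, List.getElem_ofFn, List.mem_map] at hmem
    obtain ⟨y, -, rfl⟩ := hmem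
    refine Or.inr (Or.inr ⟨by omega, pcdElem_zero_val_lt _ _ _, ?_⟩)
    rw [pcdElem_zero_val_div]
    simp only [List.length_reverse, List.length_ofFn] at hq ⊢
    rw [show n - (n - 1 - q) = q + 1 by omega]
    omega

theorem copy_eq_of_getElem?_replicatedSeq {c t : ℕ} (hlen : (b i).length = k) (hvk : v' ≤ k)
    (hc : c < n) (ht : t < v') (h : (replicatedSeq n m v' b i)[m + (c * v' + t)]? = some x) :
    x.1 < n * v ∧ x.1 / v = c := by
  have hcn : (c + 1) * v' ≤ n * v' := Nat.mul_le_mul_right v' hc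
  rw [add_one_mul] at hcn
  rcases replicatedSeq_getElem?_cases hlen hvk h with ⟨hp, -⟩ | ⟨-, hx, hcopy⟩ | ⟨hp, -⟩
  · omega
  · exact ⟨hx, hcopy.trans (Nat.div_eq_of_lt_le (by omega) (by rw [add_one_mul]; omega))⟩
  · omega

theorem lt_of_getElem?_replicatedSeq (hlen : (b i).length = k) (hvk : v' ≤ k) (hx : x.1 < n * v)
    (h : (replicatedSeq n m v' b i)[p]? = some x) :
    p < m + n * v' + (n - x.1 / v) * (k - v') := by
  rcases replicatedSeq_getElem?_cases hlen hvk h with ⟨-, hx'⟩ | ⟨hp, -⟩ | ⟨-, -, hp⟩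
  · omega
  · omega
  · exact hp

end replicatedSeq

theorem stmt_9 (d k v v' n m T : ℕ) (hk2 : 2 * v' ≤ k)
    (hm : m + (n - 1) * v' = n * k)
    (hT : T + 2 * n * v' = 3 * n * k + 3 * v')
    (b : Fin d → List (Fin v))
    (hlen : ∀ i, (b i).length = k)
    (s : Fin d → List (Fin (n * v + d * m)))
    (hs : s = fun i =>
        List.ofFn (fun t : Fin m => pcdElem (n * v) d m (n * v + d * m) le_rfl i t) ++
        (List.ofFn (fun j : Fin n =>
          ((b i).take v').map (fun x => pcdElem 0 n v (n * v + d * m) (by simp) j x))).flatten ++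
        ((List.ofFn (fun j : Fin n =>
          ((b i).drop v').map (fun x => pcdElem 0 n v (n * v + d * m) (by simp) j x))).reverse).flatten) :
    ∀ (x : Fin (n * v + d * m)) (i j : ℕ), 1 ≤ i → i ≤ n → 1 ≤ j → j ≤ v' →
      lMin s x = m + (n - i) * v' + j →
      lMax s x ≤ m + n * v' + i * (k - v') ∧
      lMin s x + lMax s x ≤ 2 * m + n * k + v' ∧
      lMin s x + lMax s x ≤ T := by
  intro x i j hi1 hin hj1 hjv' hmin
  obtain rfl : s = replicatedSeq n m v' b := hs
  have hvk : v' ≤ k := by omega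
  obtain ⟨-, i₀, h₀⟩ := occursAt_lMin (s := replicatedSeq n m v' b) (x := x) (by omega)
  rw [hmin, show m + (n - i) * v' + j - 1 = m + ((n - i) * v' + (j - 1)) by omega] at h₀
  obtain ⟨hx, hcopy⟩ :=
    copy_eq_of_getElem?_replicatedSeq (hlen i₀) hvk (by omega) (by omega) h₀
  have hmax : lMax (replicatedSeq n m v' b) x ≤ m + n * v' + i * (k - v') := by
    refine lMax_le fun ℓ ⟨hℓ, i₁, h₁⟩ => ?_
    have := lt_of_getElem?_replicatedSeq (hlen i₁) hvk hx h₁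
    rw [hcopy, show n - (n - i) = i by omega] at this
    omega
  have hsum : (n - i) * v' + v' + (n * v' + i * (k - v')) ≤ n * k + v' := by
    zify [hin, hvk, (by omega : 1 ≤ n)] at hk2 ⊢
    nlinarith
  have hT' : 2 * m + n * k + v' = T := by
    zify [(by omega : 1 ≤ n)] at hm hT ⊢
    linarith
  refine ⟨hmax, ?_, ?_⟩ <;> omega
end

section
/- Dimension-extension of prefix covering designs: if s_1,...,s_d is the (d, (nk+v')d, 3nk−(2n−3)v') prefix covering design obtained from the replicated covering-design construction (with v'=v/d, every element's primary position in the first nk+v' levels of some sequence), then for every d' > d one can extend to a (d', K', α') prefix covering design with K' = (nk+v')d + (nk−(2n−1)v')(d'−d) and α' ≤ 3nk−(2n−3)v', by adding d'−d new sequences each consisting of nk−(2n−1)v' fresh distinct elements. -/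
open scoped BigOperators

/-! Since `K ≥ 3`, the triplet condition forces every old element `x` to occur, so `lMin s x` is an
actual level (not the junk value `sInf ∅ = 0`) and `x` lies in the first `L = nk + v'` levels of
some old sequence. Each fresh element is the only copy of itself and sits in a new sequence of
length `f`. A triple of old elements keeps its old cover; a triple containing a fresh element is
covered by one prefix of length `f` and two of length at most `L`, of total length
`f + 2L ≤ α`. Old elements keep their levels and multiplicities and fresh ones occur once, so the
singleton condition is inherited. -/

section Extension

variable {d K α : ℕ} {s : Fin d → List (Fin K)}

def TripleCovered (s : Fin d → List (Fin K)) (α : ℕ) (a b c : Fin K) : Prop :=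
  ∃ (i i' i'' : Fin d) (ℓ ℓ' ℓ'' : ℕ), ℓ + ℓ' + ℓ'' ≤ α ∧
    ∀ x : Fin K, (x = a ∨ x = b ∨ x = c) →
      x ∈ (s i).take ℓ ∨ x ∈ (s i').take ℓ' ∨ x ∈ (s i'').take ℓ''

theorem tripletCond_iff :
    TripletCond d K α s ↔ ∀ a b c, a ≠ b → a ≠ c → b ≠ c → TripleCovered s α a b c :=
  Iff.rfl

theorem tripleCovered_of_mem_take {a b c : Fin K} {i i' i'' : Fin d} {ℓ ℓ' ℓ'' : ℕ}
    (ha : a ∈ (s i).take ℓ) (hb : b ∈ (s i').take ℓ') (hc : c ∈ (s i'').take ℓ'')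
    (hα : ℓ + ℓ' + ℓ'' ≤ α) : TripleCovered s α a b c := by
  refine ⟨i, i', i'', ℓ, ℓ', ℓ'', hα, ?_⟩
  rintro x (rfl | rfl | rfl)
  exacts [Or.inl ha, Or.inr (Or.inl hb), Or.inr (Or.inr hc)]

theorem mem_take_of_occursAt {x : Fin K} {ℓ : ℕ} (h : OccursAt s x ℓ) :
    ∃ i, x ∈ (s i).take ℓ := by
  obtain ⟨hℓ, i, hi⟩ := h
  refine ⟨i, List.mem_of_getElem? (i := ℓ - 1) ?_⟩
  rw [List.getElem?_take, if_pos (by omega), hi]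

theorem exists_mem_take_lMin {x : Fin K} (hx : ∃ i, x ∈ s i) :
    ∃ i, x ∈ (s i).take (lMin s x) := by
  obtain ⟨i, hi⟩ := hx
  obtain ⟨p, hp, hpx⟩ := List.getElem_of_mem hi
  have hocc : OccursAt s x (p + 1) := ⟨by omega, i, by simp [hp, hpx]⟩
  exact mem_take_of_occursAt (Nat.sInf_mem (s := {ℓ | OccursAt s x ℓ}) ⟨_, hocc⟩)

theorem TripletCond.exists_mem (hs : TripletCond d K α s) (hK : 3 ≤ K) (x : Fin K) :
    ∃ i, x ∈ s i := by
  have hcard : 1 < (Finset.univ.erase x).card := by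
    rw [Finset.card_erase_of_mem (Finset.mem_univ x), Finset.card_univ, Fintype.card_fin]
    omega
  obtain ⟨b, hb, c, hc, hbc⟩ := Finset.one_lt_card.1 hcard
  obtain ⟨i, i', i'', ℓ, ℓ', ℓ'', -, hcov⟩ :=
    hs x b c (Finset.ne_of_mem_erase hb).symm (Finset.ne_of_mem_erase hc).symm hbc
  rcases hcov x (Or.inl rfl) with h | h | h
  exacts [⟨i, List.mem_of_mem_take h⟩, ⟨i', List.mem_of_mem_take h⟩, ⟨i'', List.mem_of_mem_take h⟩]

def fresh (K f m : ℕ) (t : Fin f) (j : Fin m) : Fin (K + f * m) :=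
  Fin.natAdd K (finProdFinEquiv (t, j))

def appendFresh (s : Fin d → List (Fin K)) (f m : ℕ) : Fin (d + m) → List (Fin (K + f * m)) :=
  Fin.append (fun i => (s i).map (Fin.castAdd (f * m))) fun j => List.ofFn (fresh K f m · j)

variable {f m : ℕ}

theorem eq_castAdd_or_eq_fresh (y : Fin (K + f * m)) :
    (∃ x, y = Fin.castAdd (f * m) x) ∨ ∃ t j, y = fresh K f m t j := by
  induction y using Fin.addCases with
  | left x => exact Or.inl ⟨x, rfl⟩
  | right z =>
    refine Or.inr ⟨(finProdFinEquiv.symm z).1, (finProdFinEquiv.symm z).2, ?_⟩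
    rw [fresh, Prod.mk.eta, Equiv.apply_symm_apply]

theorem fresh_inj {t t' : Fin f} {j j' : Fin m} :
    fresh K f m t j = fresh K f m t' j' ↔ t = t' ∧ j = j' := by
  simp [fresh]

theorem castAdd_ne_fresh (x : Fin K) (t : Fin f) (j : Fin m) :
    Fin.castAdd (f * m) x ≠ fresh K f m t j := by
  simp [fresh, Fin.ext_iff]
  omega

theorem castAdd_not_mem_appendFresh_natAdd (x : Fin K) (j : Fin m) :
    Fin.castAdd (f * m) x ∉ appendFresh s f m (Fin.natAdd d j) := by
  simp [appendFresh, List.mem_ofFn, (castAdd_ne_fresh x _ _).symm]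

theorem fresh_not_mem_appendFresh_castAdd (t : Fin f) (j : Fin m) (i : Fin d) :
    fresh K f m t j ∉ appendFresh s f m (Fin.castAdd m i) := by
  simp [appendFresh, castAdd_ne_fresh]

theorem mem_take_appendFresh_castAdd {x : Fin K} {i : Fin d} {ℓ : ℕ} (h : x ∈ (s i).take ℓ) :
    Fin.castAdd (f * m) x ∈ (appendFresh s f m (Fin.castAdd m i)).take ℓ := by
  simpa [appendFresh, ← List.map_take] using h

theorem fresh_mem_take_appendFresh (t : Fin f) (j : Fin m) :
    fresh K f m t j ∈ (appendFresh s f m (Fin.natAdd d j)).take f := by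
  simp [appendFresh, List.take_of_length_le, List.mem_ofFn]

theorem exists_mem_take_appendFresh {L : ℕ} (hcover : ∀ x, ∃ i, x ∈ (s i).take L)
    (y : Fin (K + f * m)) :
    ∃ i, y ∈ (appendFresh s f m i).take (if (y : ℕ) < K then L else f) := by
  rcases eq_castAdd_or_eq_fresh y with ⟨x, rfl⟩ | ⟨t, j, rfl⟩
  · obtain ⟨i, hi⟩ := hcover x
    exact ⟨_, by simpa using mem_take_appendFresh_castAdd hi⟩
  · exact ⟨_, by simpa [fresh] using fresh_mem_take_appendFresh t j⟩

theorem TripleCovered.appendFresh {a b c : Fin K} (h : TripleCovered s α a b c) :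
    TripleCovered (appendFresh s f m) α
      (Fin.castAdd (f * m) a) (Fin.castAdd (f * m) b) (Fin.castAdd (f * m) c) := by
  obtain ⟨i, i', i'', ℓ, ℓ', ℓ'', hα, hcov⟩ := h
  refine ⟨Fin.castAdd m i, Fin.castAdd m i', Fin.castAdd m i'', ℓ, ℓ', ℓ'', hα, ?_⟩
  rintro _ (rfl | rfl | rfl)
  all_goals
    refine (hcov _ ?_).imp mem_take_appendFresh_castAdd
      (Or.imp mem_take_appendFresh_castAdd mem_take_appendFresh_castAdd)
    simp

theorem TripletCond.appendFresh {L : ℕ} (hs : TripletCond d K α s)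
    (hcover : ∀ x, ∃ i, x ∈ (s i).take L) (hα : f + 2 * L ≤ α) (hfL : f ≤ L) :
    TripletCond (d + m) (K + f * m) α (appendFresh s f m) := by
  rw [tripletCond_iff] at hs ⊢
  intro a b c hab hac hbc
  by_cases hold : (a : ℕ) < K ∧ (b : ℕ) < K ∧ (c : ℕ) < K
  · obtain ⟨ha, hb, hc⟩ := hold
    obtain ⟨a, rfl⟩ : ∃ a', Fin.castAdd (f * m) a' = a := ⟨_, Fin.castAdd_castLT _ a ha⟩
    obtain ⟨b, rfl⟩ : ∃ b', Fin.castAdd (f * m) b' = b := ⟨_, Fin.castAdd_castLT _ b hb⟩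
    obtain ⟨c, rfl⟩ : ∃ c', Fin.castAdd (f * m) c' = c := ⟨_, Fin.castAdd_castLT _ c hc⟩
    exact TripleCovered.appendFresh
      (hs a b c (ne_of_apply_ne _ hab) (ne_of_apply_ne _ hac) (ne_of_apply_ne _ hbc))
  · obtain ⟨_, ha⟩ := exists_mem_take_appendFresh (m := m) hcover a
    obtain ⟨_, hb⟩ := exists_mem_take_appendFresh (m := m) hcover b
    obtain ⟨_, hc⟩ := exists_mem_take_appendFresh (m := m) hcover c
    refine tripleCovered_of_mem_take ha hb hc ?_
    split_ifs <;> omega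

theorem occursAt_appendFresh_castAdd_iff {x : Fin K} {ℓ : ℕ} :
    OccursAt (appendFresh s f m) (Fin.castAdd (f * m) x) ℓ ↔ OccursAt s x ℓ := by
  refine and_congr_right fun _ => ⟨?_, fun ⟨i, hi⟩ => ⟨Fin.castAdd m i, ?_⟩⟩
  · rintro ⟨i, hi⟩
    induction i using Fin.addCases with
    | left i => exact ⟨i, by simpa [appendFresh] using hi⟩
    | right j => exact (castAdd_not_mem_appendFresh_natAdd x j (List.mem_of_getElem? hi)).elim
  · simp [appendFresh, hi]

theorem lMin_appendFresh_castAdd (x : Fin K) :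
    lMin (appendFresh s f m) (Fin.castAdd (f * m) x) = lMin s x := by
  simp only [lMin, occursAt_appendFresh_castAdd_iff]

theorem lMax_appendFresh_castAdd (x : Fin K) :
    lMax (appendFresh s f m) (Fin.castAdd (f * m) x) = lMax s x := by
  simp only [lMax, occursAt_appendFresh_castAdd_iff]

theorem totalCount_appendFresh_castAdd (x : Fin K) :
    totalCount (appendFresh s f m) (Fin.castAdd (f * m) x) = totalCount s x := by
  have hnew (j : Fin m) : (appendFresh s f m (Fin.natAdd d j)).count (Fin.castAdd (f * m) x) = 0 :=
    List.count_eq_zero.mpr (castAdd_not_mem_appendFresh_natAdd x j)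
  simp only [totalCount, Fin.sum_univ_add, hnew, Finset.sum_const_zero, add_zero]
  simp [appendFresh, List.count_map_of_injective _ _ (Fin.castAdd_injective _ _)]

theorem totalCount_appendFresh_fresh (t : Fin f) (j : Fin m) :
    totalCount (appendFresh s f m) (fresh K f m t j) = 1 := by
  have hold (i : Fin d) : (appendFresh s f m (Fin.castAdd m i)).count (fresh K f m t j) = 0 :=
    List.count_eq_zero.mpr (fresh_not_mem_appendFresh_castAdd t j i)
  have hnew (j' : Fin m) : (appendFresh s f m (Fin.natAdd d j')).count (fresh K f m t j) =
      if j' = j then 1 else 0 := by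
    simp only [appendFresh, Fin.append_right]
    rw [List.Nodup.count (List.nodup_ofFn.mpr fun _ _ h => (fresh_inj.1 h).1)]
    simp [List.mem_ofFn, fresh_inj]
  simp only [totalCount, Fin.sum_univ_add, hold, hnew, Finset.sum_const_zero, zero_add,
    Finset.sum_ite_eq', Finset.mem_univ, if_true]

theorem SingletonCond.appendFresh (hs : SingletonCond d K α s) :
    SingletonCond (d + m) (K + f * m) α (appendFresh s f m) := by
  intro y hy
  rcases eq_castAdd_or_eq_fresh y with ⟨x, rfl⟩ | ⟨t, j, rfl⟩
  · rw [totalCount_appendFresh_castAdd] at hy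
    rw [lMin_appendFresh_castAdd, lMax_appendFresh_castAdd]
    exact hs x hy
  · rw [totalCount_appendFresh_fresh] at hy
    omega

theorem IsPCD.appendFresh {L : ℕ} (hs : IsPCD d K α s) (hcover : ∀ x, ∃ i, x ∈ (s i).take L)
    (hα : f + 2 * L ≤ α) (hfL : f ≤ L) :
    IsPCD (d + m) (K + f * m) α (appendFresh s f m) :=
  ⟨hs.1.appendFresh hcover hα hfL, hs.2.appendFresh⟩

end Extension

theorem stmt_17_general (d d' n k v' K α f : ℕ) (hd : 3 ≤ d) (hdd' : d < d')
    (hK : K = (n * k + v') * d)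
    (hα : α + 2 * n * v' = 3 * n * k + 3 * v')
    (hf : f + (2 * n - 1) * v' = n * k)
    (s : Fin d → List (Fin K)) (hpcd : IsPCD d K α s)
    (hprim : ∀ x : Fin K, lMin s x ≤ n * k + v') :
    ∃ s' : Fin d' → List (Fin (K + f * (d' - d))),
      IsPCD d' (K + f * (d' - d)) α s' := by
  obtain ⟨m, rfl⟩ := Nat.exists_eq_add_of_le hdd'.le
  rw [Nat.add_sub_cancel_left]
  have hcover (x : Fin K) : ∃ i, x ∈ (s i).take (n * k + v') := by
    have hK3 : 3 ≤ K := by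
      have hL : 0 < n * k + v' := Nat.pos_of_mul_pos_right (hK ▸ x.pos)
      rw [hK]
      exact hd.trans (Nat.le_mul_of_pos_left d hL)
    obtain ⟨i, hi⟩ := exists_mem_take_lMin (hpcd.1.exists_mem hK3 x)
    exact ⟨i, List.take_subset_take_left _ (hprim x) hi⟩
  have h2n : 2 * n * v' ≤ (2 * n - 1) * v' + v' := by
    rw [← Nat.succ_mul]
    exact Nat.mul_le_mul_right _ (by omega)
  exact ⟨_, hpcd.appendFresh hcover (by nlinarith) (by nlinarith)⟩

theorem stmt_17 (d d' n k v' K α f : ℕ) (hd : 3 ≤ d) (hdd' : d < d') (hn : 1 ≤ n)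
    (hvk : 2 * v' ≤ k)
    (hK : K = (n * k + v') * d)
    (hα : α + 2 * n * v' = 3 * n * k + 3 * v')
    (hf : f + (2 * n - 1) * v' = n * k)
    (s : Fin d → List (Fin K)) (hpcd : IsPCD d K α s)
    (hprim : ∀ x : Fin K, lMin s x ≤ n * k + v') :
    ∃ s' : Fin d' → List (Fin (K + f * (d' - d))),
      IsPCD d' (K + f * (d' - d)) α s' :=
  stmt_17_general d d' n k v' K α f hd hdd' hK hα hf s hpcd hprim
end
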